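/- arXiv:0712.1286 — 2 statements merged into one kernel-verified Lean document; each statement's English description precedes it below -/
import Mathlib

section
/- Let p be a prime, r > 0 with r² = p, κ an integer, and γ, α nonzero complex numbers. Set μ₀ := γ⁻¹·p^((3κ-7)/2), μ₁ := γ², μ₂ := α·r, μ₃ := α⁻¹·r. Then, as polynomials in X over ℂ, ∏_{S ⊆ {1,2,3}} (1 - μ₀·(∏_{i∈S} μᵢ)·X) = [∏_{ε=±1} (1 - γ^ε·p^((κ-1)/2)·p^(κ-2)·X)·(1 - γ^ε·p^((κ-1)/2)·p^(κ-3)·X)] · [∏_{ε=±1} ∏_{δ=±1} (1 - γ^ε·α^δ·p^((κ-1)/2)·p^((2κ-5)/2)·X)]. -/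
open Polynomial

/-!
Writing `q = p^((3κ-6)/2) = r^(3κ-6)`, the Satake parameters give `μ₀ = γ⁻¹ q r⁻¹`,
`μ₀ μ₁ = γ q r⁻¹` and `{1, μ₂, μ₃, μ₂ μ₃} = r · {r⁻¹, α, α⁻¹, r}`. Splitting the subsets of
`{1, 2, 3}` according to whether they contain `1`, the eight roots of the spinor polynomial are
therefore `q γ^(±1) r^(±1)` (the two shifted standard factors of `f`) and `q γ^(±1) α^(±1)`
(the Rankin convolution of `f` and `g`).
-/

section SpinorFactor

variable {R ι : Type*} [CommRing R]

noncomputable def spinorFactor (μ₀ : R) (μ : ι → R) (s : Finset ι) : R[X] :=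
  ∏ S ∈ s.powerset, (1 - C (μ₀ * ∏ i ∈ S, μ i) * X)

theorem spinorFactor_empty (μ₀ : R) (μ : ι → R) : spinorFactor μ₀ μ ∅ = 1 - C μ₀ * X := by
  simp [spinorFactor]

theorem spinorFactor_insert [DecidableEq ι] (μ₀ : R) (μ : ι → R) {a : ι} {s : Finset ι}
    (ha : a ∉ s) :
    spinorFactor μ₀ μ (insert a s) = spinorFactor μ₀ μ s * spinorFactor (μ₀ * μ a) μ s := by
  rw [spinorFactor, Finset.prod_powerset_insert ha]
  congr 1
  refine Finset.prod_congr rfl fun S hS => ?_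
  rw [Finset.prod_insert fun haS => ha (Finset.mem_powerset.1 hS haS), mul_assoc]

theorem spinorFactor_singleton [DecidableEq ι] (μ₀ : R) (μ : ι → R) (a : ι) :
    spinorFactor μ₀ μ {a} = (1 - C μ₀ * X) * (1 - C (μ₀ * μ a) * X) := by
  rw [← Finset.insert_empty, spinorFactor_insert _ _ (Finset.notMem_empty a),
    spinorFactor_empty, spinorFactor_empty]

theorem spinorFactor_pair_of_inv [DecidableEq ι] {K : Type*} [Field K] {α r : K} (hα : α ≠ 0)
    (hr : r ≠ 0) (c : K) {μ : ι → K} {i j : ι} (hij : i ≠ j) (hi : μ i = α * r)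
    (hj : μ j = α⁻¹ * r) :
    spinorFactor (c * r⁻¹) μ {i, j} =
      (1 - C (c * r⁻¹) * X) * (1 - C (c * α⁻¹) * X) *
        ((1 - C (c * α) * X) * (1 - C (c * r) * X)) := by
  rw [spinorFactor_insert _ _ (Finset.notMem_singleton.2 hij), spinorFactor_singleton,
    spinorFactor_singleton, hi, hj]
  have hj' : c * r⁻¹ * (α⁻¹ * r) = c * α⁻¹ := by field_simp
  have hi' : c * r⁻¹ * (α * r) = c * α := by field_simp
  have hij' : c * r⁻¹ * (α * r) * (α⁻¹ * r) = c * r := by field_simp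
  rw [hij', hj', hi']

end SpinorFactor

theorem zpow_mul_sq_zpow {K : Type*} [DivisionRing K] {r : K} (hr : r ≠ 0) (m n : ℤ) :
    r ^ m * (r ^ 2) ^ n = r ^ (m + 2 * n) := by
  rw [← zpow_natCast, ← zpow_mul, ← zpow_add₀ hr]
  norm_num

theorem spinor_factorization_general (p : ℕ) (r : ℝ) (hr : 0 < r)
    (hr2 : r ^ 2 = (p : ℝ)) (κ : ℤ) (γ α : ℂ) (hγ : γ ≠ 0) (hα : α ≠ 0)
    (μ₀ : ℂ) (hμ₀ : μ₀ = γ⁻¹ * (r : ℂ) ^ (3 * κ - 7))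
    (μ : ℕ → ℂ) (hμ1 : μ 1 = γ ^ 2) (hμ2 : μ 2 = α * (r : ℂ)) (hμ3 : μ 3 = α⁻¹ * (r : ℂ)) :
    ∏ S ∈ ({1, 2, 3} : Finset ℕ).powerset, (1 - C (μ₀ * ∏ i ∈ S, μ i) * X)
      = ((1 - C (γ * (r : ℂ) ^ (κ - 1) * (p : ℂ) ^ (κ - 2)) * X) *
           (1 - C (γ * (r : ℂ) ^ (κ - 1) * (p : ℂ) ^ (κ - 3)) * X) *
         ((1 - C (γ⁻¹ * (r : ℂ) ^ (κ - 1) * (p : ℂ) ^ (κ - 2)) * X) *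
           (1 - C (γ⁻¹ * (r : ℂ) ^ (κ - 1) * (p : ℂ) ^ (κ - 3)) * X))) *
        ((1 - C (γ * α * (r : ℂ) ^ (κ - 1) * (r : ℂ) ^ (2 * κ - 5)) * X) *
          (1 - C (γ * α⁻¹ * (r : ℂ) ^ (κ - 1) * (r : ℂ) ^ (2 * κ - 5)) * X) *
         ((1 - C (γ⁻¹ * α * (r : ℂ) ^ (κ - 1) * (r : ℂ) ^ (2 * κ - 5)) * X) *
           (1 - C (γ⁻¹ * α⁻¹ * (r : ℂ) ^ (κ - 1) * (r : ℂ) ^ (2 * κ - 5)) * X))) := by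
  have hR : (r : ℂ) ≠ 0 := Complex.ofReal_ne_zero.2 hr.ne'
  have hp : (p : ℂ) = (r : ℂ) ^ 2 := by exact_mod_cast congrArg Complex.ofReal hr2.symm
  set q : ℂ := (r : ℂ) ^ (3 * κ - 6) with hq
  have hq_inv : (r : ℂ) ^ (3 * κ - 7) = q * (r : ℂ)⁻¹ := by
    rw [hq, ← zpow_sub_one₀ hR]; congr 1; ring
  have hκ2 : (r : ℂ) ^ (κ - 1) * (p : ℂ) ^ (κ - 2) = q * r := by
    rw [hp, zpow_mul_sq_zpow hR, hq, ← zpow_add_one₀ hR]; congr 1; ring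
  have hκ3 : (r : ℂ) ^ (κ - 1) * (p : ℂ) ^ (κ - 3) = q * (r : ℂ)⁻¹ := by
    rw [hp, zpow_mul_sq_zpow hR, ← hq_inv]; congr 1; ring
  have hκ5 : (r : ℂ) ^ (κ - 1) * (r : ℂ) ^ (2 * κ - 5) = q := by
    rw [hq, ← zpow_add₀ hR]; congr 1; ring
  have hμ₀μ₁ : μ₀ * μ 1 = γ * q * (r : ℂ)⁻¹ := by
    rw [hμ₀, hμ1, hq_inv]; field_simp
  have hμ₀' : μ₀ = γ⁻¹ * q * (r : ℂ)⁻¹ := by rw [hμ₀, hq_inv, mul_assoc]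
  change spinorFactor μ₀ μ (insert 1 {2, 3}) = _
  rw [spinorFactor_insert _ _ (by decide), hμ₀μ₁, hμ₀',
    spinorFactor_pair_of_inv hα hR _ (by decide) hμ2 hμ3,
    spinorFactor_pair_of_inv hα hR _ (by decide) hμ2 hμ3]
  simp only [mul_assoc _ ((r : ℂ) ^ (κ - 1)), hκ2, hκ3, hκ5, map_mul]
  ring

/-- Factorization of the local spinor L-factor of a degree-3 Miyawaki lift:
∏_{S⊆{1,2,3}} (1 - μ₀(∏_{i∈S}μᵢ)X) equals the product of the local factors of
L(s-κ+2,f), L(s-κ+3,f) and the Rankin convolution L(s,f⊗g). -/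
theorem spinor_factorization (p : ℕ) (hp : Nat.Prime p) (r : ℝ) (hr : 0 < r)
    (hr2 : r ^ 2 = (p : ℝ)) (κ : ℤ) (γ α : ℂ) (hγ : γ ≠ 0) (hα : α ≠ 0)
    (μ₀ : ℂ) (hμ₀ : μ₀ = γ⁻¹ * (r : ℂ) ^ (3 * κ - 7))
    (μ : ℕ → ℂ) (hμ1 : μ 1 = γ ^ 2) (hμ2 : μ 2 = α * (r : ℂ)) (hμ3 : μ 3 = α⁻¹ * (r : ℂ)) :
    ∏ S ∈ ({1, 2, 3} : Finset ℕ).powerset, (1 - C (μ₀ * ∏ i ∈ S, μ i) * X)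
      = ((1 - C (γ * (r : ℂ) ^ (κ - 1) * (p : ℂ) ^ (κ - 2)) * X) *
           (1 - C (γ * (r : ℂ) ^ (κ - 1) * (p : ℂ) ^ (κ - 3)) * X) *
         ((1 - C (γ⁻¹ * (r : ℂ) ^ (κ - 1) * (p : ℂ) ^ (κ - 2)) * X) *
           (1 - C (γ⁻¹ * (r : ℂ) ^ (κ - 1) * (p : ℂ) ^ (κ - 3)) * X))) *
        ((1 - C (γ * α * (r : ℂ) ^ (κ - 1) * (r : ℂ) ^ (2 * κ - 5)) * X) *
          (1 - C (γ * α⁻¹ * (r : ℂ) ^ (κ - 1) * (r : ℂ) ^ (2 * κ - 5)) * X) *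
         ((1 - C (γ⁻¹ * α * (r : ℂ) ^ (κ - 1) * (r : ℂ) ^ (2 * κ - 5)) * X) *
           (1 - C (γ⁻¹ * α⁻¹ * (r : ℂ) ^ (κ - 1) * (r : ℂ) ^ (2 * κ - 5)) * X))) :=
  spinor_factorization_general p r hr hr2 κ γ α hγ hα μ₀ hμ₀ μ hμ1 hμ2 hμ3
end

section
/- Let p be a prime, r > 0 with r² = p, κ an integer, and γ, α nonzero complex numbers. Let ρ₁,…,ρ₈ be the eight numbers μ₀·∏_{i∈S}μᵢ, S ⊆ {1,2,3}, where μ₀ = γ⁻¹p^((3κ-7)/2), μ₁ = γ², μ₂ = αr, μ₃ = α⁻¹r. Set a_f := p^((κ-1)/2)(γ+γ⁻¹) and a_g := p^((2κ-5)/2)(α+α⁻¹). Then the second elementary symmetric polynomial e₂(ρ₁,…,ρ₈) equals p·( Λ₁ + (p²+1)·Λ₂ + (p²+1)²·p^(3κ-12) ), where Λ₂ := a_f²p^(2κ-8) + a_g p^(2κ-7)(p+1) − p^(3κ-12)(p³+1) and Λ₁ := a_f²·a_g·p^(κ-4)(p+1) + a_f²p^(2κ-8)(p²-1) + a_g²p^(κ-2)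 − a_g p^(2κ-7)(p²+1)(p+1) + p^(3κ-10)(p³+1)(p-1). -/
/-!
The eight roots are `μ₀` times the subset products of `μ₁, μ₂, μ₃`, so `e₂` of them is `μ₀²` times
`e₂` of the subset products, which expands by peeling off one root at a time. Every power of `p`
and `r` occurring on either side is `(r ^ κ) ^ a / r ^ b` for natural `a, b`, so after naming
`t = r ^ κ` the claim is an identity of Laurent polynomials in `γ, α, r, t`.
-/

namespace Multiset
variable {R : Type*} [CommSemiring R]

theorem esymm_eq_zero_of_card_lt {s : Multiset R} {n : ℕ} (h : card s < n) : s.esymm n = 0 := by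
  simp [esymm, powersetCard_eq_empty _ h]

theorem esymm_one (s : Multiset R) : s.esymm 1 = s.sum := by
  simp [esymm, powersetCard_one]

theorem esymm_cons_succ (a : R) (s : Multiset R) (n : ℕ) :
    (a ::ₘ s).esymm (n + 1) = a * s.esymm n + s.esymm (n + 1) := by
  simp only [esymm, powersetCard_cons, map_add, sum_add, map_map, Function.comp_def, prod_cons,
    sum_map_mul_left, add_comm]

theorem esymm_cons_two (a : R) (s : Multiset R) :
    (a ::ₘ s).esymm 2 = a * s.sum + s.esymm 2 := by
  rw [esymm_cons_succ, esymm_one]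

theorem esymm_map_mul_left {α : Type*} (c : R) (f : α → R) (s : Multiset α) (n : ℕ) :
    (s.map fun x => c * f x).esymm n = c ^ n * (s.map f).esymm n := by
  simpa [map_map, Function.comp_def] using (pow_smul_esymm c n (s.map f)).symm

end Multiset

theorem Finset.powerset_three_map_prod {R : Type*} [CommMonoid R] (μ : ℕ → R) :
    ((({1, 2, 3} : Finset ℕ).powerset.val).map fun S => ∏ i ∈ S, μ i) =
      {1, μ 1, μ 2, μ 1 * μ 2, μ 3, μ 1 * μ 3, μ 2 * μ 3, μ 1 * (μ 2 * μ 3)} := by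
  have : ({1, 2, 3} : Finset ℕ).powerset.val =
      {∅, {1}, {2}, {1, 2}, {3}, {1, 3}, {2, 3}, {1, 2, 3}} := by decide
  simp [this]

theorem e2_spinor_roots_general (p : ℕ) (r : ℝ) (hr : 0 < r)
    (hr2 : r ^ 2 = (p : ℝ)) (κ : ℤ) (γ α : ℂ) (hγ : γ ≠ 0) (hα : α ≠ 0)
    (μ₀ : ℂ) (hμ₀ : μ₀ = γ⁻¹ * (r : ℂ) ^ (3 * κ - 7))
    (μ : ℕ → ℂ) (hμ1 : μ 1 = γ ^ 2) (hμ2 : μ 2 = α * (r : ℂ)) (hμ3 : μ 3 = α⁻¹ * (r : ℂ))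
    (a_f a_g : ℂ) (haf : a_f = (r : ℂ) ^ (κ - 1) * (γ + γ⁻¹))
    (hag : a_g = (r : ℂ) ^ (2 * κ - 5) * (α + α⁻¹))
    (Λ₁ Λ₂ : ℂ)
    (hΛ₂ : Λ₂ = a_f ^ 2 * (p : ℂ) ^ (2 * κ - 8) + a_g * (p : ℂ) ^ (2 * κ - 7) * ((p : ℂ) + 1)
        - (p : ℂ) ^ (3 * κ - 12) * ((p : ℂ) ^ (3 : ℕ) + 1))
    (hΛ₁ : Λ₁ = a_f ^ 2 * a_g * (p : ℂ) ^ (κ - 4) * ((p : ℂ) + 1)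
        + a_f ^ 2 * (p : ℂ) ^ (2 * κ - 8) * ((p : ℂ) ^ (2 : ℕ) - 1)
        + a_g ^ 2 * (p : ℂ) ^ (κ - 2)
        - a_g * (p : ℂ) ^ (2 * κ - 7) * ((p : ℂ) ^ (2 : ℕ) + 1) * ((p : ℂ) + 1)
        + (p : ℂ) ^ (3 * κ - 10) * ((p : ℂ) ^ (3 : ℕ) + 1) * ((p : ℂ) - 1)) :
    (((({1, 2, 3} : Finset ℕ).powerset.val).map (fun S => μ₀ * ∏ i ∈ S, μ i)).esymm 2)
      = (p : ℂ) * (Λ₁ + ((p : ℂ) ^ (2 : ℕ) + 1) * Λ₂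
          + ((p : ℂ) ^ (2 : ℕ) + 1) ^ 2 * (p : ℂ) ^ (3 * κ - 12)) := by
  have hR : (r : ℂ) ≠ 0 := Complex.ofReal_ne_zero.mpr hr.ne'
  have hpr : (p : ℂ) = (r : ℂ) ^ 2 := by exact_mod_cast hr2.symm
  have hp0 : (p : ℂ) ≠ 0 := hpr ▸ pow_ne_zero 2 hR
  have hpκ : (p : ℂ) ^ κ = ((r : ℂ) ^ κ) ^ 2 := by
    rw [hpr, ← zpow_natCast, ← zpow_natCast, ← zpow_mul, ← zpow_mul, mul_comm]
  rw [Multiset.esymm_map_mul_left, Finset.powerset_three_map_prod]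
  simp only [Multiset.insert_eq_cons, Multiset.esymm_cons_two, Multiset.sum_cons,
    Multiset.sum_singleton]
  rw [Multiset.esymm_eq_zero_of_card_lt (by simp), hμ1, hμ2, hμ3]
  subst hμ₀ haf hag hΛ₁ hΛ₂
  simp only [zpow_sub₀ hR, zpow_sub₀ hp0, zpow_mul', zpow_ofNat, hpκ]
  rw [hpr]
  generalize (r : ℂ) ^ κ = t
  field_simp
  ring

/-- e₂ of the eight inverse spinor roots of a degree-3 Miyawaki lift equals
p(Λ₁ + (p²+1)Λ₂ + (p²+1)²p^(3κ-12)) with Miyawaki's conjectured eigenvalues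
Λ₁ = λ_F(T₁(p²)), Λ₂ = λ_F(T₂(p²)). -/
theorem e2_spinor_roots (p : ℕ) (hp : Nat.Prime p) (r : ℝ) (hr : 0 < r)
    (hr2 : r ^ 2 = (p : ℝ)) (κ : ℤ) (γ α : ℂ) (hγ : γ ≠ 0) (hα : α ≠ 0)
    (μ₀ : ℂ) (hμ₀ : μ₀ = γ⁻¹ * (r : ℂ) ^ (3 * κ - 7))
    (μ : ℕ → ℂ) (hμ1 : μ 1 = γ ^ 2) (hμ2 : μ 2 = α * (r : ℂ)) (hμ3 : μ 3 = α⁻¹ * (r : ℂ))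
    (a_f a_g : ℂ) (haf : a_f = (r : ℂ) ^ (κ - 1) * (γ + γ⁻¹))
    (hag : a_g = (r : ℂ) ^ (2 * κ - 5) * (α + α⁻¹))
    (Λ₁ Λ₂ : ℂ)
    (hΛ₂ : Λ₂ = a_f ^ 2 * (p : ℂ) ^ (2 * κ - 8) + a_g * (p : ℂ) ^ (2 * κ - 7) * ((p : ℂ) + 1)
        - (p : ℂ) ^ (3 * κ - 12) * ((p : ℂ) ^ (3 : ℕ) + 1))
    (hΛ₁ : Λ₁ = a_f ^ 2 * a_g * (p : ℂ) ^ (κ - 4) * ((p : ℂ) + 1)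
        + a_f ^ 2 * (p : ℂ) ^ (2 * κ - 8) * ((p : ℂ) ^ (2 : ℕ) - 1)
        + a_g ^ 2 * (p : ℂ) ^ (κ - 2)
        - a_g * (p : ℂ) ^ (2 * κ - 7) * ((p : ℂ) ^ (2 : ℕ) + 1) * ((p : ℂ) + 1)
        + (p : ℂ) ^ (3 * κ - 10) * ((p : ℂ) ^ (3 : ℕ) + 1) * ((p : ℂ) - 1)) :
    (((({1, 2, 3} : Finset ℕ).powerset.val).map (fun S => μ₀ * ∏ i ∈ S, μ i)).esymm 2)
      = (p : ℂ) * (Λ₁ + ((p : ℂ) ^ (2 : ℕ) + 1) * Λ₂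
          + ((p : ℂ) ^ (2 : ℕ) + 1) ^ 2 * (p : ℂ) ^ (3 * κ - 12)) :=
  e2_spinor_roots_general p r hr hr2 κ γ α hγ hα μ₀ hμ₀ μ hμ1 hμ2 hμ3 a_f a_g haf hag Λ₁ Λ₂ hΛ₂ hΛ₁
end
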